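/- arXiv:1401.6192 — 4 statements merged into one kernel-verified Lean document; each statement's English description precedes it below -/
import Mathlib

section
/- Let m ≥ 3 be an integer and let f : (0,∞) → (0,∞) be twice differentiable with f'(s) ≥ 0 for all s > 0 and with nonnegative scalar curvature, i.e. ((m−1)/f(s)²)·((m−2)·(1 − f'(s)²) − 2·f(s)·f''(s)) ≥ 0 for all s > 0. Then the Hawking mass function m_H(s) = (1/2)·f(s)^{m−2}·(1 − f'(s)²) is monotone nondecreasing on (0,∞). -/
/-- **Monotonicity of the Hawking mass.**
For an integer `m ≥ 3` and a positive twice differentiable profile function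
`f : (0,∞) → (0,∞)` with `f' ≥ 0` and nonnegative scalar curvature
`R(s) = ((m−1)/f(s)²)·((m−2)·(1 − f'(s)²) − 2·f(s)·f''(s)) ≥ 0`,
the Hawking mass `m_H(s) = (1/2)·f(s)^(m−2)·(1 − f'(s)²)` is monotone
nondecreasing on `(0,∞)`. -/
theorem hawking_mass_monotone
    (m : ℕ) (hm : 3 ≤ m) (f : ℝ → ℝ)
    (hpos : ∀ s > (0:ℝ), 0 < f s)
    (hdiff : ∀ s > (0:ℝ), DifferentiableAt ℝ f s)
    (hdiff' : ∀ s > (0:ℝ), DifferentiableAt ℝ (deriv f) s)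
    (hmono : ∀ s > (0:ℝ), 0 ≤ deriv f s)
    (hscal : ∀ s > (0:ℝ),
      0 ≤ ((m:ℝ) - 1) / (f s) ^ 2 *
        (((m:ℝ) - 2) * (1 - (deriv f s) ^ 2) - 2 * f s * deriv (deriv f) s)) :
    MonotoneOn (fun s => (1/2) * f s ^ (m - 2) * (1 - (deriv f s) ^ 2))
      (Set.Ioi (0:ℝ)) := by
  have hD : ∀ x ∈ Set.Ioi (0:ℝ), HasDerivAt
      (fun s => (1/2) * f s ^ (m - 2) * (1 - (deriv f s) ^ 2))
      ((1/2 * (↑(m-2) * f x ^ (m - 2 - 1) * deriv f x)) * (1 - (deriv f x)^2)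
        + (1/2 * f x ^ (m-2)) * (0 - 2 * deriv f x ^ 1 * deriv (deriv f) x)) x := by
    intro x hx
    have hf' : HasDerivAt f (deriv f x) x := (hdiff x hx).hasDerivAt
    have hf'' : HasDerivAt (deriv f) (deriv (deriv f) x) x := (hdiff' x hx).hasDerivAt
    have h1 : HasDerivAt (fun s => (1/2 : ℝ) * f s ^ (m - 2))
        (1/2 * (↑(m-2) * f x ^ (m - 2 - 1) * deriv f x)) x := (hf'.pow (m-2)).const_mul _
    have h2 : HasDerivAt (fun s => 1 - (deriv f s) ^ 2)
        (0 - 2 * deriv f x ^ 1 * deriv (deriv f) x) x :=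
      (hasDerivAt_const x 1).sub (hf''.pow 2)
    exact h1.mul h2
  apply monotoneOn_of_deriv_nonneg (convex_Ioi 0)
  · intro x hx
    exact (hD x hx).continuousAt.continuousWithinAt
  · intro x hx
    rw [interior_Ioi] at hx
    exact (hD x hx).differentiableAt.differentiableWithinAt
  · intro x hx
    rw [interior_Ioi] at hx
    rw [(hD x hx).deriv]
    -- bracket nonnegativity from scalar curvature
    have hfx := hpos x hx
    have hc : 0 < ((m:ℝ) - 1) / (f x) ^ 2 := by
      apply div_pos
      · have : (3:ℝ) ≤ (m:ℝ) := by exact_mod_cast hm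
        linarith
      · positivity
    have hb : 0 ≤ ((m:ℝ) - 2) * (1 - (deriv f x) ^ 2) - 2 * f x * deriv (deriv f) x := by
      have h := div_nonneg (hscal x hx) hc.le
      rwa [mul_div_cancel_left₀ _ hc.ne'] at h
    obtain ⟨k, hk⟩ : ∃ k, m - 2 = k + 1 := ⟨m - 3, by omega⟩
    have hk' : m - 2 - 1 = k := by omega
    have key : 0 ≤ (1/2) * f x ^ k * deriv f x *
        (((m:ℝ) - 2) * (1 - (deriv f x) ^ 2) - 2 * f x * deriv (deriv f) x) := by
      have h1 : (0:ℝ) ≤ (1/2) * f x ^ k * deriv f x :=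
        mul_nonneg (by positivity) (hmono x hx)
      exact mul_nonneg h1 hb
    have hm2 : (m:ℝ) - 2 = (k:ℝ) + 1 := by
      have h2 : (2:ℕ) ≤ m := by omega
      have : (m:ℝ) = ((k:ℝ) + 1) + 2 := by exact_mod_cast (by omega : m = (k+1)+2)
      linarith
    rw [hm2] at key
    rw [hk]
    simp only [Nat.add_sub_cancel]
    push_cast
    calc (0:ℝ) ≤ _ := key
      _ = 1 / 2 * (((k:ℝ) + 1) * f x ^ k * deriv f x) * (1 - deriv f x ^ 2) +
          1 / 2 * f x ^ (k + 1) * (0 - 2 * deriv f x ^ 1 * deriv (deriv f) x) := by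
        rw [pow_succ]; ring
end

section
/- Let r₀ > 0, D > 0 and let δ > 0 satisfy δ ≤ min{ r₀/32 , 8⁴·r₀⁹/(r₀+D)⁸ }. Set Q = (8δ/(r₀+D))^{4/9}. Then: (i) 2δ/(r₀ − 2δ) ≤ Q²; (ii) Q ≤ (1/4)^{4/9} < 1; and (iii) 4π·(8D + 4π r₀)·( δ²·(1 + Q^{−2})² + (r₀+D)²·√Q ) ≤ 48π·(2D + π r₀)·(r₀+D)^{16/9}·δ^{2/9}. -/
open Real

/-- **The optimal choice of `Q` for the tubular neighborhood estimate.**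
Let `r₀, D > 0` and `0 < δ ≤ min{r₀/32, 8⁴·r₀⁹/(r₀+D)⁸}`, and set
`Q = (8δ/(r₀+D))^(4/9)`.  Then (i) `2δ/(r₀ − 2δ) ≤ Q²`;
(ii) `Q ≤ (1/4)^(4/9) < 1`; and (iii)
`4π(8D + 4πr₀)(δ²(1 + Q⁻²)² + (r₀+D)²√Q) ≤ 48π(2D + πr₀)(r₀+D)^(16/9)·δ^(2/9)`. -/
theorem optimal_Q_tubular_estimate
    (r₀ D δ : ℝ) (hr : 0 < r₀) (hD : 0 < D) (hδpos : 0 < δ)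
    (hδ : δ ≤ min (r₀ / 32) (8 ^ 4 * r₀ ^ 9 / (r₀ + D) ^ 8)) :
    2 * δ / (r₀ - 2 * δ) ≤ ((8 * δ / (r₀ + D)) ^ ((4:ℝ)/9)) ^ 2
    ∧ ((8 * δ / (r₀ + D)) ^ ((4:ℝ)/9) ≤ (1/4 : ℝ) ^ ((4:ℝ)/9)
        ∧ (1/4 : ℝ) ^ ((4:ℝ)/9) < 1)
    ∧ 4 * π * (8 * D + 4 * π * r₀) *
          (δ ^ 2 * (1 + (((8 * δ / (r₀ + D)) ^ ((4:ℝ)/9))⁻¹) ^ 2) ^ 2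
            + (r₀ + D) ^ 2 * Real.sqrt ((8 * δ / (r₀ + D)) ^ ((4:ℝ)/9)))
        ≤ 48 * π * (2 * D + π * r₀) * (r₀ + D) ^ ((16:ℝ)/9) * δ ^ ((2:ℝ)/9) := by
  obtain ⟨hδ1, hδ2⟩ := le_min_iff.mp hδ
  have hs : 0 < r₀ + D := by linarith
  set x : ℝ := 8 * δ / (r₀ + D) with hxdef
  have hx : 0 < x := by positivity
  have hx1 : x ≤ 1/4 := by
    rw [hxdef, div_le_iff₀ hs]; nlinarith
  have hδs : δ * (r₀ + D) ^ 8 ≤ 4096 * r₀ ^ 9 := by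
    rw [le_div_iff₀ (by positivity)] at hδ2
    norm_num at hδ2 ⊢; linarith
  -- Part (i)
  have part1 : 2 * δ / (r₀ - 2 * δ) ≤ (x ^ ((4:ℝ)/9)) ^ 2 := by
    have hsq : (x ^ ((4:ℝ)/9)) ^ 2 = x ^ ((8:ℝ)/9) := by
      rw [← Real.rpow_natCast (x ^ ((4:ℝ)/9)) 2, ← Real.rpow_mul hx.le]; norm_num
    rw [hsq]
    have hden : (0:ℝ) < r₀ - 2 * δ := by linarith
    have hb : 0 ≤ x ^ ((8:ℝ)/9) := (Real.rpow_pos_of_pos hx _).le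
    have h9 : (2 * δ / (r₀ - 2 * δ)) ^ (9:ℕ) ≤ (x ^ ((8:ℝ)/9)) ^ (9:ℕ) := by
      have hrw : (x ^ ((8:ℝ)/9)) ^ (9:ℕ) = x ^ (8:ℕ) := by
        rw [← Real.rpow_natCast (x ^ ((8:ℝ)/9)) 9, ← Real.rpow_mul hx.le,
          ← Real.rpow_natCast x 8]
        norm_num
      rw [hrw, hxdef, div_pow, div_pow, div_le_div_iff₀ (by positivity) (by positivity)]
      have h15 : (15:ℝ)/16 * r₀ ≤ r₀ - 2 * δ := by linarith
      have key : (2*δ)^9 * (r₀+D)^8 ≤ (8*δ)^8 * ((15:ℝ)/16 * r₀)^9 := by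
        have hpow8 : (0:ℝ) ≤ δ^8 := by positivity
        calc (2*δ)^9 * (r₀+D)^8 = 512 * δ^8 * (δ * (r₀+D)^8) := by ring
          _ ≤ 512 * δ^8 * (4096 * r₀^9) := by
              apply mul_le_mul_of_nonneg_left hδs (by positivity)
          _ = 2097152 * (δ^8 * r₀^9) := by ring
          _ ≤ ((8:ℝ)^8 * ((15:ℝ)/16)^9) * (δ^8 * r₀^9) := by
              apply mul_le_mul_of_nonneg_right (by norm_num) (by positivity)
          _ = (8*δ)^8 * ((15:ℝ)/16 * r₀)^9 := by ring
      calc (2*δ)^9 * (r₀+D)^8 ≤ (8*δ)^8 * ((15:ℝ)/16 * r₀)^9 := key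
        _ ≤ (8*δ)^8 * (r₀ - 2*δ)^9 := by
            apply mul_le_mul_of_nonneg_left _ (by positivity)
            exact pow_le_pow_left₀ (by positivity) h15 9
    exact le_of_pow_le_pow_left₀ (by norm_num) hb h9
  -- Part (ii)
  have part2a : x ^ ((4:ℝ)/9) ≤ (1/4 : ℝ) ^ ((4:ℝ)/9) :=
    Real.rpow_le_rpow hx.le hx1 (by norm_num)
  have part2b : (1/4 : ℝ) ^ ((4:ℝ)/9) < 1 :=
    Real.rpow_lt_one (by norm_num) (by norm_num) (by norm_num)
  refine ⟨part1, ⟨part2a, part2b⟩, ?_⟩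
  -- Part (iii)
  have hinv : ((x ^ ((4:ℝ)/9))⁻¹) ^ 2 = x ^ (-(8:ℝ)/9) := by
    rw [← Real.rpow_neg hx.le, ← Real.rpow_natCast (x ^ (-((4:ℝ)/9))) 2, ← Real.rpow_mul hx.le]
    norm_num
  have hsqrt : Real.sqrt (x ^ ((4:ℝ)/9)) = x ^ ((2:ℝ)/9) := by
    rw [Real.sqrt_eq_rpow, ← Real.rpow_mul hx.le]; norm_num
  rw [hinv, hsqrt]
  have hxm : ∀ r : ℝ, x ^ r = 8 ^ r * δ ^ r / (r₀ + D) ^ r := by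
    intro r
    rw [hxdef, Real.div_rpow (by positivity) hs.le, Real.mul_rpow (by norm_num) hδpos.le]
  have hKpos : (0:ℝ) < (r₀ + D) ^ ((16:ℝ)/9) * δ ^ ((2:ℝ)/9) := by positivity
  have key : δ ^ 2 * (1 + x ^ (-(8:ℝ)/9)) ^ 2 + (r₀ + D) ^ 2 * x ^ ((2:ℝ)/9)
      ≤ 3 * (r₀ + D) ^ ((16:ℝ)/9) * δ ^ ((2:ℝ)/9) := by
    -- term 2
    have t2 : (r₀ + D) ^ 2 * x ^ ((2:ℝ)/9)
        ≤ 2 * ((r₀ + D) ^ ((16:ℝ)/9) * δ ^ ((2:ℝ)/9)) := by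
      have h8 : (8:ℝ) ^ ((2:ℝ)/9) ≤ 2 := by
        have h82 : (8:ℝ) ^ ((2:ℝ)/9) = 2 ^ ((2:ℝ)/3) := by
          rw [show (8:ℝ) = 2 ^ (3:ℕ) by norm_num, ← Real.rpow_natCast (2:ℝ) 3,
            ← Real.rpow_mul (by norm_num)]
          norm_num
        rw [h82]
        calc (2:ℝ) ^ ((2:ℝ)/3) ≤ 2 ^ (1:ℝ) :=
              Real.rpow_le_rpow_of_exponent_le (by norm_num) (by norm_num)
          _ = 2 := Real.rpow_one 2
      have hne : ((r₀ + D):ℝ) ^ ((2:ℝ)/9) ≠ 0 := (Real.rpow_pos_of_pos hs _).ne'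
      have et2 : (r₀ + D) ^ 2 * x ^ ((2:ℝ)/9)
          = 8 ^ ((2:ℝ)/9) * ((r₀ + D) ^ ((16:ℝ)/9) * δ ^ ((2:ℝ)/9)) := by
        have hsplit : ((r₀ + D):ℝ) ^ 2 = (r₀ + D) ^ ((16:ℝ)/9) * (r₀ + D) ^ ((2:ℝ)/9) := by
          rw [← Real.rpow_natCast (r₀ + D) 2, ← Real.rpow_add hs]; norm_num
        rw [hxm, hsplit]; field_simp
      rw [et2]
      exact mul_le_mul_of_nonneg_right h8 hKpos.le
    -- term 1
    have t1 : δ ^ 2 * (1 + x ^ (-(8:ℝ)/9)) ^ 2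
        ≤ 1 * ((r₀ + D) ^ ((16:ℝ)/9) * δ ^ ((2:ℝ)/9)) := by
      set y : ℝ := x ^ (-(8:ℝ)/9) with hydef
      have hypos : 0 < y := Real.rpow_pos_of_pos hx _
      have hy1 : 1 ≤ y := by
        rw [hydef]
        apply Real.one_le_rpow_of_pos_of_le_one_of_nonpos hx (by linarith) (by norm_num)
      have hy2 : y ^ 2 = x ^ (-(16:ℝ)/9) := by
        rw [hydef, ← Real.rpow_natCast (x ^ (-(8:ℝ)/9)) 2, ← Real.rpow_mul hx.le]
        norm_num
      have step1 : δ ^ 2 * (1 + y) ^ 2 ≤ 4 * δ ^ 2 * x ^ (-(16:ℝ)/9) := by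
        have : (1 + y) ^ 2 ≤ 4 * y ^ 2 := by nlinarith
        calc δ ^ 2 * (1 + y) ^ 2 ≤ δ ^ 2 * (4 * y ^ 2) := by
              apply mul_le_mul_of_nonneg_left this (by positivity)
          _ = 4 * δ ^ 2 * x ^ (-(16:ℝ)/9) := by rw [← hy2]; ring
      have et1 : δ ^ 2 * x ^ (-(16:ℝ)/9)
          = 8 ^ (-(16:ℝ)/9) * ((r₀ + D) ^ ((16:ℝ)/9) * δ ^ ((2:ℝ)/9)) := by
        have hd2 : (δ:ℝ) ^ 2 = δ ^ ((2:ℝ)/9) * δ ^ ((16:ℝ)/9) := by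
          rw [← Real.rpow_natCast δ 2, ← Real.rpow_add hδpos]; norm_num
        have hne1 : (δ:ℝ) ^ ((16:ℝ)/9) ≠ 0 := (Real.rpow_pos_of_pos hδpos _).ne'
        have hne2 : ((r₀ + D):ℝ) ^ ((16:ℝ)/9) ≠ 0 := (Real.rpow_pos_of_pos hs _).ne'
        rw [hxm, hd2, show (-(16:ℝ)/9) = -((16:ℝ)/9) by norm_num,
          Real.rpow_neg hδpos.le, Real.rpow_neg hs.le, Real.rpow_neg (by norm_num : (0:ℝ) ≤ 8)]
        field_simp
      have h816 : (8:ℝ) ^ (-(16:ℝ)/9) ≤ 1/32 := by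
        have h82 : (8:ℝ) ^ (-(16:ℝ)/9) = 2 ^ (-(16:ℝ)/3) := by
          rw [show (8:ℝ) = 2 ^ (3:ℕ) by norm_num, ← Real.rpow_natCast (2:ℝ) 3,
            ← Real.rpow_mul (by norm_num)]
          norm_num
        rw [h82]
        calc (2:ℝ) ^ (-(16:ℝ)/3) ≤ 2 ^ (-(5:ℝ)) :=
              Real.rpow_le_rpow_of_exponent_le (by norm_num) (by norm_num)
          _ = 1/32 := by
              rw [show (-(5:ℝ)) = ((-5 : ℤ) : ℝ) by norm_num, Real.rpow_intCast]
              norm_num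
      calc δ ^ 2 * (1 + y) ^ 2 ≤ 4 * δ ^ 2 * x ^ (-(16:ℝ)/9) := step1
        _ = 4 * (8 ^ (-(16:ℝ)/9)) * ((r₀ + D) ^ ((16:ℝ)/9) * δ ^ ((2:ℝ)/9)) := by
            rw [mul_assoc, et1]; ring
        _ ≤ 4 * (1/32) * ((r₀ + D) ^ ((16:ℝ)/9) * δ ^ ((2:ℝ)/9)) := by
            apply mul_le_mul_of_nonneg_right _ hKpos.le
            linarith
        _ ≤ 1 * ((r₀ + D) ^ ((16:ℝ)/9) * δ ^ ((2:ℝ)/9)) := by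
            apply mul_le_mul_of_nonneg_right (by norm_num) hKpos.le
    linarith
  calc 4 * π * (8 * D + 4 * π * r₀) *
        (δ ^ 2 * (1 + x ^ (-(8:ℝ)/9)) ^ 2 + (r₀ + D) ^ 2 * x ^ ((2:ℝ)/9))
      ≤ 4 * π * (8 * D + 4 * π * r₀) * (3 * (r₀ + D) ^ ((16:ℝ)/9) * δ ^ ((2:ℝ)/9)) := by
        apply mul_le_mul_of_nonneg_left key
        have := Real.pi_pos; positivity
    _ = 48 * π * (2 * D + π * r₀) * (r₀ + D) ^ ((16:ℝ)/9) * δ ^ ((2:ℝ)/9) := by ring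
end

section
/- Let r₀ > 0, δ ≥ 0, let h : [0,∞) → ℝ be a backward profile function with area radius r₀ and Hawking mass bound δ, and let 0 < x ≤ r₀. Then for every σ with 0 ≤ σ ≤ r₀ − x the following hold: (i) max(r₀ − σ, 0) ≤ h(σ) ≤ r₀; (ii) 0 ≤ 1 + h'(σ) ≤ √(2δ/x); (iii) 0 ≤ h(σ) − (r₀ − σ) ≤ σ·√(2δ/x). -/
/-!
Integrating `-1 ≤ h' ≤ 0` from `h 0 = r₀` gives `r₀ - σ ≤ h σ ≤ r₀`, so `h ≥ x` on
`[0, r₀ - x]`. There the mass bound caps the slope: `(1 + h')² ≤ 1 - h'² ≤ 2δ / h ≤ 2δ / x`,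
and integrating this slope bound once more gives the estimate on `h σ - (r₀ - σ)`.
-/

/-- A *backward profile function* with area radius `r₀` and Hawking mass
bound `δ`: a differentiable function `h : [0,∞) → ℝ` with `h(0) = r₀`,
`−1 ≤ h'(σ) ≤ 0` and `h(σ)·(1 − h'(σ)²) ≤ 2δ` for all `σ ≥ 0`. -/
def IsBackwardProfile (r₀ δ : ℝ) (h : ℝ → ℝ) : Prop :=
  h 0 = r₀
  ∧ (∀ σ ≥ (0:ℝ), DifferentiableAt ℝ h σ)
  ∧ (∀ σ ≥ (0:ℝ), -1 ≤ deriv h σ ∧ deriv h σ ≤ 0)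
  ∧ (∀ σ ≥ (0:ℝ), h σ * (1 - (deriv h σ) ^ 2) ≤ 2 * δ)

open Set

namespace IsBackwardProfile

variable {r₀ δ : ℝ} {h : ℝ → ℝ}

theorem continuousOn_Icc (hh : IsBackwardProfile r₀ δ h) (σ : ℝ) :
    ContinuousOn h (Icc 0 σ) :=
  fun t ht => (hh.2.1 t ht.1).continuousAt.continuousWithinAt

theorem differentiableOn_interior_Icc (hh : IsBackwardProfile r₀ δ h) (σ : ℝ) :
    DifferentiableOn ℝ h (interior (Icc 0 σ)) := by
  rw [interior_Icc]
  exact fun t ht => (hh.2.1 t ht.1.le).differentiableWithinAt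

theorem mul_le_sub_of_le_deriv (hh : IsBackwardProfile r₀ δ h) {C σ : ℝ} (hσ : 0 ≤ σ)
    (hC : ∀ t ∈ Ioo 0 σ, C ≤ deriv h t) : C * σ ≤ h σ - r₀ := by
  have := (convex_Icc 0 σ).mul_sub_le_image_sub_of_le_deriv (hh.continuousOn_Icc σ)
    (hh.differentiableOn_interior_Icc σ) (by rwa [interior_Icc]) 0 ⟨le_rfl, hσ⟩ σ
    ⟨hσ, le_rfl⟩ hσ
  rwa [hh.1, sub_zero] at this

theorem sub_le_mul_of_deriv_le (hh : IsBackwardProfile r₀ δ h) {C σ : ℝ} (hσ : 0 ≤ σ)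
    (hC : ∀ t ∈ Ioo 0 σ, deriv h t ≤ C) : h σ - r₀ ≤ C * σ := by
  have := (convex_Icc 0 σ).image_sub_le_mul_sub_of_deriv_le (hh.continuousOn_Icc σ)
    (hh.differentiableOn_interior_Icc σ) (by rwa [interior_Icc]) 0 ⟨le_rfl, hσ⟩ σ
    ⟨hσ, le_rfl⟩ hσ
  rwa [hh.1, sub_zero] at this

theorem sub_le_apply (hh : IsBackwardProfile r₀ δ h) {σ : ℝ} (hσ : 0 ≤ σ) : r₀ - σ ≤ h σ := by
  have := hh.mul_le_sub_of_le_deriv hσ fun t ht => (hh.2.2.1 t ht.1.le).1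
  linarith

theorem apply_le (hh : IsBackwardProfile r₀ δ h) {σ : ℝ} (hσ : 0 ≤ σ) : h σ ≤ r₀ := by
  have := hh.sub_le_mul_of_deriv_le hσ fun t ht => (hh.2.2.1 t ht.1.le).2
  linarith

theorem one_add_deriv_nonneg (hh : IsBackwardProfile r₀ δ h) {σ : ℝ} (hσ : 0 ≤ σ) :
    0 ≤ 1 + deriv h σ := by
  linarith [(hh.2.2.1 σ hσ).1]

theorem one_add_deriv_le_sqrt (hh : IsBackwardProfile r₀ δ h) {x σ : ℝ} (hx : 0 < x)
    (hσ : 0 ≤ σ) (hxh : x ≤ h σ) : 1 + deriv h σ ≤ Real.sqrt (2 * δ / x) := by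
  obtain ⟨hd₁, hd₂⟩ := hh.2.2.1 σ hσ
  have hsq : (1 + deriv h σ) ^ 2 ≤ 1 - deriv h σ ^ 2 := by nlinarith
  have hmass : x * (1 - deriv h σ ^ 2) ≤ 2 * δ :=
    (mul_le_mul_of_nonneg_right hxh (by nlinarith)).trans (hh.2.2.2 σ hσ)
  have hbound : (1 + deriv h σ) ^ 2 ≤ 2 * δ / x := by
    rw [le_div_iff₀ hx]
    nlinarith
  exact Real.le_sqrt_of_sq_le hbound

theorem one_add_deriv_le_sqrt_of_le_sub (hh : IsBackwardProfile r₀ δ h) {x σ : ℝ}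
    (hx : 0 < x) (hσ : 0 ≤ σ) (hσx : σ ≤ r₀ - x) : 1 + deriv h σ ≤ Real.sqrt (2 * δ / x) :=
  hh.one_add_deriv_le_sqrt hx hσ (by linarith [hh.sub_le_apply hσ])

theorem apply_sub_le_mul_sqrt (hh : IsBackwardProfile r₀ δ h) {x σ : ℝ} (hx : 0 < x)
    (hσ : 0 ≤ σ) (hσx : σ ≤ r₀ - x) : h σ - (r₀ - σ) ≤ σ * Real.sqrt (2 * δ / x) := by
  have := hh.sub_le_mul_of_deriv_le (C := Real.sqrt (2 * δ / x) - 1) hσ fun t ht => by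
    linarith [hh.one_add_deriv_le_sqrt_of_le_sub hx ht.1.le (by linarith [ht.2])]
  linarith

end IsBackwardProfile

theorem backward_profile_pointwise_bounds_general
    (r₀ δ : ℝ)
    (h : ℝ → ℝ) (hprof : IsBackwardProfile r₀ δ h)
    (x : ℝ) (hx : 0 < x) :
    ∀ σ : ℝ, 0 ≤ σ → σ ≤ r₀ - x →
      (max (r₀ - σ) 0 ≤ h σ ∧ h σ ≤ r₀)
      ∧ (0 ≤ 1 + deriv h σ ∧ 1 + deriv h σ ≤ Real.sqrt (2 * δ / x))
      ∧ (0 ≤ h σ - (r₀ - σ) ∧ h σ - (r₀ - σ) ≤ σ * Real.sqrt (2 * δ / x)) := by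
  intro σ hσ hσx
  have hlower := hprof.sub_le_apply hσ
  refine ⟨⟨max_le hlower (by linarith), hprof.apply_le hσ⟩,
    ⟨hprof.one_add_deriv_nonneg hσ, hprof.one_add_deriv_le_sqrt_of_le_sub hx hσ hσx⟩,
    ⟨by linarith, hprof.apply_sub_le_mul_sqrt hx hσ hσx⟩⟩

/-- **Pointwise bounds on a backward profile function.**
If `h` is a backward profile function with area radius `r₀ > 0` and Hawking
mass bound `δ ≥ 0`, and `0 < x ≤ r₀`, then for every `0 ≤ σ ≤ r₀ − x`:
(i) `max(r₀ − σ, 0) ≤ h(σ) ≤ r₀`; (ii) `0 ≤ 1 + h'(σ) ≤ √(2δ/x)`;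
(iii) `0 ≤ h(σ) − (r₀ − σ) ≤ σ·√(2δ/x)`. -/
theorem backward_profile_pointwise_bounds
    (r₀ δ : ℝ) (hr : 0 < r₀) (hδ : 0 ≤ δ)
    (h : ℝ → ℝ) (hprof : IsBackwardProfile r₀ δ h)
    (x : ℝ) (hx : 0 < x) (hxr : x ≤ r₀) :
    ∀ σ : ℝ, 0 ≤ σ → σ ≤ r₀ - x →
      (max (r₀ - σ) 0 ≤ h σ ∧ h σ ≤ r₀)
      ∧ (0 ≤ 1 + deriv h σ ∧ 1 + deriv h σ ≤ Real.sqrt (2 * δ / x))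
      ∧ (0 ≤ h σ - (r₀ - σ) ∧ h σ - (r₀ - σ) ≤ σ * Real.sqrt (2 * δ / x)) :=
  backward_profile_pointwise_bounds_general r₀ δ h hprof x hx
end

section
/- Let r₀ > 0, δ ≥ 0, let h : [0,∞) → ℝ be a backward profile function with area radius r₀ and Hawking mass bound δ, and let 0 < D ≤ r₀. Then ∫₀^D ( h(σ)² − (r₀−σ)² )² · 4π·(r₀−σ)² dσ + ∫₀^D ( 2·h(σ)·h'(σ) + 2·(r₀−σ) )² · 4π·(r₀−σ)² dσ ≤ (1 + r₀²)·( 16·√π · r₀² · δ^{1/3} · D^{1/6} )². -/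
open Real intervalIntegral

/-!
Put `u = r₀ - σ`. From `-1 ≤ h' ≤ 0` we get `u ≤ h ≤ r₀`. With `p = h (1 + h')` and
`f = h - u`, the two integrands are `4π ((h + u) f u)²` and `16π ((p - f) u)²`. On `[0, r₀]`
both `p u` and `f u` lie in `[0, r₀ m]`, `m = min (2δ) r₀`: the bound `p ≤ 2δ` is the Hawking
mass bound, as `1 - h' ≥ 1`; the bound `f u ≤ 2δσ` integrates `(f u)' = (1 + h') u - f ≤ p`;
the bounds by `r₀` come from `u ≤ h ≤ r₀`. So the left side is at most `16π r₀² (1 + r₀²) m² D`,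
and `m² D ≤ 4 r₀² δ^(2/3) D^(1/3)` interpolates between `m ≤ 2δ` and `m, D ≤ r₀`.
-/

lemma min_sq_mul_le {δ r D : ℝ} (hδ : 0 ≤ δ) (hD : 0 ≤ D) (hDr : D ≤ r) :
    min (2 * δ) r ^ 2 * D ≤ 4 * r ^ 2 * (δ ^ (1 / 3 : ℝ) * D ^ (1 / 6 : ℝ)) ^ 2 := by
  set m := min (2 * δ) r
  set t := δ ^ (1 / 3 : ℝ)
  set d := D ^ (1 / 6 : ℝ)
  have hr : 0 ≤ r := hD.trans hDr
  have hm : 0 ≤ m := le_min (by positivity) hr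
  have ht : 0 ≤ t := rpow_nonneg hδ _
  have hd : 0 ≤ d := rpow_nonneg hD _
  have ht3 : t ^ 3 = δ := by
    simpa [t, one_div] using rpow_inv_natCast_pow (n := 3) hδ (by norm_num)
  have hd6 : d ^ 6 = D := by
    simpa [d, one_div] using rpow_inv_natCast_pow (n := 6) hD (by norm_num)
  have hmδ : m ≤ 2 * t ^ 3 := ht3 ▸ min_le_left _ _
  have hmr : m ≤ r := min_le_right _ _
  have hdr : d ^ 6 ≤ r := hd6 ▸ hDr
  have hcube : (m * d ^ 2) ^ 3 ≤ (2 * (t * r)) ^ 3 := by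
    calc (m * d ^ 2) ^ 3 = m * m ^ 2 * d ^ 6 := by ring
      _ ≤ (2 * t ^ 3) * r ^ 2 * r := by gcongr
      _ ≤ (2 * (t * r)) ^ 3 := by nlinarith [pow_nonneg (mul_nonneg ht hr) 3]
  have hlin : m * d ^ 2 ≤ 2 * (t * r) :=
    (pow_le_pow_iff_left₀ (by positivity) (by positivity) (by norm_num)).mp hcube
  calc m ^ 2 * D = (m * d ^ 2) ^ 2 * d ^ 2 := by rw [← hd6]; ring
    _ ≤ (2 * (t * r)) ^ 2 * d ^ 2 := by gcongr
    _ = 4 * r ^ 2 * (t * d) ^ 2 := by ring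

lemma integral_sq_mul_weight_le {F : ℝ → ℝ} {r₀ a b B : ℝ} (hab : a ≤ b)
    (hF : ∀ σ ∈ Set.Ioc a b, |F σ * (r₀ - σ)| ≤ B) :
    ∫ σ in a..b, F σ ^ 2 * (4 * π * (r₀ - σ) ^ 2) ≤ 4 * π * B ^ 2 * (b - a) := by
  have hpt : ∀ σ ∈ Set.uIoc a b, ‖F σ ^ 2 * (4 * π * (r₀ - σ) ^ 2)‖ ≤ 4 * π * B ^ 2 := by
    intro σ hσ
    rw [Set.uIoc_of_le hab] at hσ
    have hsq : (F σ * (r₀ - σ)) ^ 2 ≤ B ^ 2 := by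
      simpa only [sq_abs] using pow_le_pow_left₀ (abs_nonneg _) (hF σ hσ) 2
    rw [Real.norm_of_nonneg (by positivity)]
    nlinarith [pi_pos]
  calc _ ≤ ‖∫ σ in a..b, F σ ^ 2 * (4 * π * (r₀ - σ) ^ 2)‖ := le_abs_self _
    _ ≤ 4 * π * B ^ 2 * |b - a| := norm_integral_le_of_norm_le_const hpt
    _ = 4 * π * B ^ 2 * (b - a) := by rw [abs_of_nonneg (sub_nonneg.mpr hab)]

namespace IsBackwardProfile

variable {r₀ δ : ℝ} {h : ℝ → ℝ} {σ : ℝ}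

lemma hasDerivAt (hp : IsBackwardProfile r₀ δ h) (hσ : 0 ≤ σ) : HasDerivAt h (deriv h σ) σ :=
  (hp.2.1 σ hσ).hasDerivAt

lemma continuousOn (hp : IsBackwardProfile r₀ δ h) : ContinuousOn h (Set.Ici 0) :=
  fun _ hx => (hp.hasDerivAt hx).continuousAt.continuousWithinAt

lemma deriv_mem_Icc (hp : IsBackwardProfile r₀ δ h) (hσ : 0 ≤ σ) :
    deriv h σ ∈ Set.Icc (-1) 0 :=
  hp.2.2.1 σ hσ

lemma mul_one_sub_deriv_sq_le (hp : IsBackwardProfile r₀ δ h) (hσ : 0 ≤ σ) :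
    h σ * (1 - deriv h σ ^ 2) ≤ 2 * δ :=
  hp.2.2.2 σ hσ

lemma antitoneOn (hp : IsBackwardProfile r₀ δ h) : AntitoneOn h (Set.Ici 0) := by
  refine antitoneOn_of_hasDerivWithinAt_nonpos (f' := deriv h) (convex_Ici 0) hp.continuousOn
    (fun x hx => ?_) (fun x hx => ?_)
  all_goals rw [interior_Ici] at hx
  · exact (hp.hasDerivAt hx.le).hasDerivWithinAt
  · exact (hp.deriv_mem_Icc hx.le).2

lemma monotoneOn_add_id (hp : IsBackwardProfile r₀ δ h) :
    MonotoneOn (fun s => h s + s) (Set.Ici 0) := by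
  refine monotoneOn_of_hasDerivWithinAt_nonneg (f' := fun x => deriv h x + 1) (convex_Ici 0)
    (hp.continuousOn.add continuousOn_id) (fun x hx => ?_) (fun x hx => ?_)
  all_goals rw [interior_Ici] at hx
  · exact ((hp.hasDerivAt hx.le).add (hasDerivAt_id x)).hasDerivWithinAt
  · linarith [(hp.deriv_mem_Icc hx.le).1]

lemma le_radius (hp : IsBackwardProfile r₀ δ h) (hσ : 0 ≤ σ) : h σ ≤ r₀ :=
  hp.1 ▸ hp.antitoneOn Set.self_mem_Ici hσ hσ

lemma radius_sub_le (hp : IsBackwardProfile r₀ δ h) (hσ : 0 ≤ σ) : r₀ - σ ≤ h σ := by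
  have := hp.monotoneOn_add_id Set.self_mem_Ici hσ hσ
  simp only [hp.1, add_zero] at this
  linarith

lemma hawking_bound_nonneg (hp : IsBackwardProfile r₀ δ h) (hr : 0 ≤ r₀) : 0 ≤ δ := by
  have hmass := hp.mul_one_sub_deriv_sq_le le_rfl
  obtain ⟨h₁, h₂⟩ := hp.deriv_mem_Icc le_rfl
  rw [hp.1] at hmass
  nlinarith [mul_nonneg hr (by nlinarith : 0 ≤ 1 - deriv h 0 ^ 2)]

lemma mul_one_add_deriv_nonneg (hp : IsBackwardProfile r₀ δ h) (hσ : 0 ≤ σ) (hσr : σ ≤ r₀) :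
    0 ≤ h σ * (1 + deriv h σ) :=
  mul_nonneg (by linarith [hp.radius_sub_le hσ]) (by linarith [(hp.deriv_mem_Icc hσ).1])

lemma mul_one_add_deriv_le_two_mul (hp : IsBackwardProfile r₀ δ h) (hσ : 0 ≤ σ)
    (hσr : σ ≤ r₀) : h σ * (1 + deriv h σ) ≤ 2 * δ := by
  have hp0 := hp.mul_one_add_deriv_nonneg hσ hσr
  have hmass := hp.mul_one_sub_deriv_sq_le hσ
  nlinarith [mul_nonneg hp0 (neg_nonneg.mpr (hp.deriv_mem_Icc hσ).2)]

lemma mul_one_add_deriv_le_min (hp : IsBackwardProfile r₀ δ h) (hσ : 0 ≤ σ) (hσr : σ ≤ r₀) :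
    h σ * (1 + deriv h σ) ≤ min (2 * δ) r₀ := by
  refine le_min (hp.mul_one_add_deriv_le_two_mul hσ hσr) ?_
  have hh0 : 0 ≤ h σ := by linarith [hp.radius_sub_le hσ]
  have h₂ := (hp.deriv_mem_Icc hσ).2
  nlinarith [hp.le_radius hσ]

lemma excess_mul_le_two_mul (hp : IsBackwardProfile r₀ δ h) (hσ : 0 ≤ σ) (hσr : σ ≤ r₀) :
    (h σ - (r₀ - σ)) * (r₀ - σ) ≤ 2 * δ * σ := by
  let g : ℝ → ℝ := fun s => (h s - (r₀ - s)) * (r₀ - s) - 2 * δ * s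
  let g' : ℝ → ℝ := fun s => (1 + deriv h s) * (r₀ - s) - (h s - (r₀ - s)) - 2 * δ
  have hg : ∀ s, 0 ≤ s → HasDerivAt g (g' s) s := by
    intro s hs
    have hu : HasDerivAt (fun s : ℝ => r₀ - s) (-1) s := by
      simpa using (hasDerivAt_id s).const_sub r₀
    exact (((hp.hasDerivAt hs).sub hu).mul hu |>.sub ((hasDerivAt_id s).const_mul (2 * δ)))
      |>.congr_deriv (by simp only [g', Pi.sub_apply]; ring)
  have hanti : AntitoneOn g (Set.Icc 0 r₀) := by
    refine antitoneOn_of_hasDerivWithinAt_nonpos (f' := g') (convex_Icc 0 r₀)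
      (fun s hs => (hg s hs.1).continuousAt.continuousWithinAt) (fun s hs => ?_) (fun s hs => ?_)
    all_goals rw [interior_Icc] at hs
    · exact (hg s hs.1.le).hasDerivWithinAt
    · have hlow := hp.radius_sub_le hs.1.le
      have hp' := hp.mul_one_add_deriv_le_two_mul hs.1.le hs.2.le
      have hu : (1 + deriv h s) * (r₀ - s) ≤ (1 + deriv h s) * h s :=
        mul_le_mul_of_nonneg_left hlow (by linarith [(hp.deriv_mem_Icc hs.1.le).1])
      simp only [g']
      linarith
  have := hanti ⟨le_rfl, hσ.trans hσr⟩ ⟨hσ, hσr⟩ hσ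
  simp only [g, hp.1] at this
  linarith

lemma excess_mul_le_min (hp : IsBackwardProfile r₀ δ h) (hσ : 0 ≤ σ) (hσr : σ ≤ r₀) :
    (h σ - (r₀ - σ)) * (r₀ - σ) ≤ r₀ * min (2 * δ) r₀ := by
  rw [mul_min_of_nonneg _ _ (hσ.trans hσr)]
  have hle := hp.le_radius hσ
  have hlow := hp.radius_sub_le hσ
  refine le_min ?_ ?_
  · have hδ := hp.hawking_bound_nonneg (hσ.trans hσr)
    nlinarith [hp.excess_mul_le_two_mul hσ hσr]
  · exact mul_le_mul (by linarith) (by linarith) (by linarith) (hσ.trans hσr)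

lemma abs_sq_sub_sq_mul_le (hp : IsBackwardProfile r₀ δ h) (hσ : 0 ≤ σ) (hσr : σ ≤ r₀) :
    |(h σ ^ 2 - (r₀ - σ) ^ 2) * (r₀ - σ)| ≤ 2 * r₀ ^ 2 * min (2 * δ) r₀ := by
  have hle := hp.le_radius hσ
  have hlow := hp.radius_sub_le hσ
  have hex := hp.excess_mul_le_min hσ hσr
  have hex0 : 0 ≤ (h σ - (r₀ - σ)) * (r₀ - σ) := mul_nonneg (by linarith) (by linarith)
  have hfac : (h σ ^ 2 - (r₀ - σ) ^ 2) * (r₀ - σ)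
      = (h σ + (r₀ - σ)) * ((h σ - (r₀ - σ)) * (r₀ - σ)) := by ring
  rw [hfac, abs_of_nonneg (mul_nonneg (by linarith) hex0)]
  calc (h σ + (r₀ - σ)) * ((h σ - (r₀ - σ)) * (r₀ - σ))
      ≤ (2 * r₀) * (r₀ * min (2 * δ) r₀) := mul_le_mul (by linarith) hex hex0 (by linarith)
    _ = 2 * r₀ ^ 2 * min (2 * δ) r₀ := by ring

lemma abs_deriv_sq_sub_sq_mul_le (hp : IsBackwardProfile r₀ δ h) (hσ : 0 ≤ σ) (hσr : σ ≤ r₀) :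
    |(2 * h σ * deriv h σ + 2 * (r₀ - σ)) * (r₀ - σ)| ≤ 2 * r₀ * min (2 * δ) r₀ := by
  have hu : 0 ≤ r₀ - σ := by linarith
  have hp0 := hp.mul_one_add_deriv_nonneg hσ hσr
  have hpu : h σ * (1 + deriv h σ) * (r₀ - σ) ≤ r₀ * min (2 * δ) r₀ := by
    rw [mul_comm r₀]
    exact mul_le_mul (hp.mul_one_add_deriv_le_min hσ hσr) (by linarith) hu
      (hp0.trans (hp.mul_one_add_deriv_le_min hσ hσr))
  have hfac : (2 * h σ * deriv h σ + 2 * (r₀ - σ)) * (r₀ - σ)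
      = 2 * (h σ * (1 + deriv h σ) * (r₀ - σ) - (h σ - (r₀ - σ)) * (r₀ - σ)) := by ring
  have hdiff := abs_sub_le_of_nonneg_of_le (mul_nonneg hp0 hu) hpu
    (mul_nonneg (sub_nonneg.mpr (hp.radius_sub_le hσ)) hu) (hp.excess_mul_le_min hσ hσr)
  rw [hfac, abs_mul, abs_two]
  linarith

end IsBackwardProfile

theorem sobolev_stability_thin_regions_general
    (r₀ δ D : ℝ)
    (h : ℝ → ℝ) (hprof : IsBackwardProfile r₀ δ h)
    (hD : 0 < D) (hDr : D ≤ r₀) :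
    (∫ σ in (0:ℝ)..D, ((h σ) ^ 2 - (r₀ - σ) ^ 2) ^ 2 * (4 * π * (r₀ - σ) ^ 2))
      + (∫ σ in (0:ℝ)..D,
          (2 * h σ * deriv h σ + 2 * (r₀ - σ)) ^ 2 * (4 * π * (r₀ - σ) ^ 2))
    ≤ (1 + r₀ ^ 2) *
        (16 * Real.sqrt π * r₀ ^ 2 * δ ^ ((1:ℝ)/3) * D ^ ((1:ℝ)/6)) ^ 2 := by
  set m := min (2 * δ) r₀
  have hI₁ := integral_sq_mul_weight_le hD.le fun σ hσ =>
    hprof.abs_sq_sub_sq_mul_le hσ.1.le (hσ.2.trans hDr)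
  have hI₂ := integral_sq_mul_weight_le hD.le fun σ hσ =>
    hprof.abs_deriv_sq_sub_sq_mul_le hσ.1.le (hσ.2.trans hDr)
  have hinterp := min_sq_mul_le (hprof.hawking_bound_nonneg (hD.le.trans hDr)) hD.le hDr
  have hrhs : (16 * √π * r₀ ^ 2 * δ ^ ((1:ℝ)/3) * D ^ ((1:ℝ)/6)) ^ 2
      = 256 * π * r₀ ^ 4 * (δ ^ ((1:ℝ)/3) * D ^ ((1:ℝ)/6)) ^ 2 := by
    rw [show 16 * √π * r₀ ^ 2 * δ ^ ((1:ℝ)/3) * D ^ ((1:ℝ)/6)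
      = √π * (16 * r₀ ^ 2 * (δ ^ ((1:ℝ)/3) * D ^ ((1:ℝ)/6))) by ring, mul_pow,
      sq_sqrt pi_nonneg]
    ring
  rw [hrhs]
  set X := δ ^ ((1:ℝ)/3) * D ^ ((1:ℝ)/6)
  calc _ ≤ 4 * π * (2 * r₀ ^ 2 * m) ^ 2 * (D - 0) + 4 * π * (2 * r₀ * m) ^ 2 * (D - 0) :=
        add_le_add hI₁ hI₂
    _ = 16 * π * r₀ ^ 2 * (1 + r₀ ^ 2) * (m ^ 2 * D) := by ring
    _ ≤ 16 * π * r₀ ^ 2 * (1 + r₀ ^ 2) * (4 * r₀ ^ 2 * X ^ 2) := by gcongr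
    _ = (1 + r₀ ^ 2) * (64 * π * r₀ ^ 4 * X ^ 2) := by ring
    _ ≤ (1 + r₀ ^ 2) * (256 * π * r₀ ^ 4 * X ^ 2) := by gcongr; norm_num

/-- **Sobolev stability of thin inner tubular regions.**
If `h` is a backward profile function with area radius `r₀ > 0` and Hawking
mass bound `δ ≥ 0`, and `0 < D ≤ r₀`, then the squared weighted `H¹` norm of
`h² − (r₀−σ)²` on `[0,D]` is at most `(1 + r₀²)·(16√π·r₀²·δ^(1/3)·D^(1/6))²`. -/
theorem sobolev_stability_thin_regions
    (r₀ δ D : ℝ) (hr : 0 < r₀) (hδ : 0 ≤ δ)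
    (h : ℝ → ℝ) (hprof : IsBackwardProfile r₀ δ h)
    (hD : 0 < D) (hDr : D ≤ r₀) :
    (∫ σ in (0:ℝ)..D, ((h σ) ^ 2 - (r₀ - σ) ^ 2) ^ 2 * (4 * π * (r₀ - σ) ^ 2))
      + (∫ σ in (0:ℝ)..D,
          (2 * h σ * deriv h σ + 2 * (r₀ - σ)) ^ 2 * (4 * π * (r₀ - σ) ^ 2))
    ≤ (1 + r₀ ^ 2) *
        (16 * Real.sqrt π * r₀ ^ 2 * δ ^ ((1:ℝ)/3) * D ^ ((1:ℝ)/6)) ^ 2 :=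
  sobolev_stability_thin_regions_general r₀ δ D h hprof hD hDr
end
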